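/- arXiv:0911.4689 — 3 statements merged into one kernel-verified Lean document; each statement's English description precedes it below -/
import Mathlib

section
/- If u_1, ..., u_{m+1} is an orthonormal system in an inner product space V, Ω is an alternating (m+1)-form on V with comass at most 1 (i.e. |Ω(v_1,...,v_{m+1})| ≤ 1 for every orthonormal system v_i), and Ω(u_1,...,u_{m+1}) = cos θ for some θ ∈ [0,π], then for every unit vector w orthogonal to all u_i and every index j, |Ω(w, u_1, ..., û_j, ..., u_{m+1})| ≤ sin θ, where û_j denotes omission of u_j. -/
open RealInnerProductSpace

/-!
Replace `u j` by `x = a • u j + b • w` with `a ^ 2 + b ^ 2 = 1`. The new system is still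
orthonormal, and by multilinearity `Ω` takes the value `a * cos θ + b * S` on it, where
`S = Ω (update u j w)`. The comass bound for every such `(a, b)` forces `cos θ ^ 2 + S ^ 2 ≤ 1`,
i.e. `S ^ 2 ≤ sin θ ^ 2`.
-/

theorem Orthonormal.update {𝕜 E ι : Type*} [RCLike 𝕜] [NormedAddCommGroup E]
    [InnerProductSpace 𝕜 E] [DecidableEq ι] {u : ι → E} (hu : Orthonormal 𝕜 u) {j : ι} {x : E}
    (hx : ‖x‖ = 1) (hxu : ∀ i, i ≠ j → inner 𝕜 x (u i) = 0) :
    Orthonormal 𝕜 (Function.update u j x) := by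
  refine ⟨fun i => ?_, fun i k hik => ?_⟩
  · rcases eq_or_ne i j with rfl | hi
    · simpa using hx
    · simpa [Function.update_of_ne hi] using hu.1 i
  · rcases eq_or_ne i j with rfl | hi
    · rw [Function.update_self, Function.update_of_ne (Ne.symm hik)]
      exact hxu k (Ne.symm hik)
    · rcases eq_or_ne k j with rfl | hk
      · rw [Function.update_self, Function.update_of_ne hi, inner_eq_zero_symm]
        exact hxu i hi
      · rw [Function.update_of_ne hi, Function.update_of_ne hk]
        exact hu.2 hik

theorem norm_smul_add_smul_eq_one {E : Type*} [NormedAddCommGroup E] [InnerProductSpace ℝ E]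
    {e f : E} (he : ‖e‖ = 1) (hf : ‖f‖ = 1) (hef : ⟪e, f⟫ = 0) {a b : ℝ}
    (hab : a ^ 2 + b ^ 2 = 1) : ‖a • e + b • f‖ = 1 := by
  refine (pow_eq_one_iff_of_nonneg (norm_nonneg _) two_ne_zero).mp ?_
  rw [norm_add_sq_real, real_inner_smul_left, real_inner_smul_right, hef, norm_smul, norm_smul,
    he, hf, Real.norm_eq_abs, Real.norm_eq_abs]
  nlinarith [sq_abs a, sq_abs b]

theorem sq_add_sq_le_one_of_forall_abs_le_one {c s : ℝ}
    (h : ∀ a b : ℝ, a ^ 2 + b ^ 2 = 1 → |a * c + b * s| ≤ 1) : c ^ 2 + s ^ 2 ≤ 1 := by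
  obtain ⟨r, hr0, hr2⟩ : ∃ r : ℝ, 0 ≤ r ∧ r ^ 2 = c ^ 2 + s ^ 2 :=
    ⟨_, Real.sqrt_nonneg _, Real.sq_sqrt (by positivity)⟩
  rcases hr0.eq_or_lt with hr | hr
  · nlinarith
  · -- the unit vector `(c, s) / r` attains the value `r`
    have hval : c / r * c + s / r * s = r := by field_simp; linarith
    have hunit : (c / r) ^ 2 + (s / r) ^ 2 = 1 := by field_simp; linarith
    have hle := h _ _ hunit
    rw [hval, abs_of_pos hr] at hle
    nlinarith

theorem AlternatingMap.sq_add_sq_le_one_of_comass_le_one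
    {V : Type*} [NormedAddCommGroup V] [InnerProductSpace ℝ V] {ι : Type*} [DecidableEq ι]
    (Ω : V [⋀^ι]→ₗ[ℝ] ℝ) (hcomass : ∀ v : ι → V, Orthonormal ℝ v → |Ω v| ≤ 1)
    {u : ι → V} (hu : Orthonormal ℝ u) {w : V} (hw : ‖w‖ = 1) (hwu : ∀ i, ⟪w, u i⟫ = 0)
    (j : ι) : Ω u ^ 2 + Ω (Function.update u j w) ^ 2 ≤ 1 := by
  refine sq_add_sq_le_one_of_forall_abs_le_one fun a b hab => ?_
  have hx : ‖a • u j + b • w‖ = 1 :=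
    norm_smul_add_smul_eq_one (hu.1 j) hw (by rw [real_inner_comm]; exact hwu j) hab
  have hxu : ∀ i, i ≠ j → ⟪a • u j + b • w, u i⟫ = 0 := fun i hi => by
    rw [inner_add_left, real_inner_smul_left, real_inner_smul_left, hu.2 hi.symm, hwu i]
    ring
  have hval : Ω (Function.update u j (a • u j + b • w)) =
      a * Ω u + b * Ω (Function.update u j w) := by
    rw [Ω.map_update_add, Ω.map_update_smul, Ω.map_update_smul, Function.update_eq_self]
    rfl
  exact hval ▸ hcomass _ (hu.update hx hxu)

/-- If `u` is an orthonormal system of `m+1` vectors in a real inner product space `V`,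
`Ω` is an alternating `(m+1)`-form of comass at most `1`, `Ω u = cos θ` with `θ ∈ [0, π]`,
then for every unit vector `w` orthogonal to all the `u i` and every index `j`,
`|Ω(w, u₁, …, ûⱼ, …, u_{m+1})| ≤ sin θ` (here the omission of `uⱼ` and insertion of `w`
is encoded by replacing `uⱼ` with `w`, which changes the value only by a sign). -/
theorem comass_bound_on_replaced_orthonormal_system
    {V : Type*} [NormedAddCommGroup V] [InnerProductSpace ℝ V]
    {m : ℕ} (Ω : AlternatingMap ℝ V ℝ (Fin (m + 1)))
    (hcomass : ∀ v : Fin (m + 1) → V, Orthonormal ℝ v → |Ω v| ≤ 1)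
    (u : Fin (m + 1) → V) (hu : Orthonormal ℝ u)
    (θ : ℝ) (hθ0 : 0 ≤ θ) (hθπ : θ ≤ Real.pi) (hΩu : Ω u = Real.cos θ)
    (w : V) (hw : ‖w‖ = 1) (hwu : ∀ i, ⟪w, u i⟫ = 0) (j : Fin (m + 1)) :
    |Ω (Function.update u j w)| ≤ Real.sin θ := by
  have key := Ω.sq_add_sq_le_one_of_comass_le_one hcomass hu hw hwu j
  rw [hΩu] at key
  refine abs_le_of_sq_le_sq ?_ (Real.sin_nonneg_of_nonneg_of_le_pi hθ0 hθπ)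
  nlinarith [Real.sin_sq_add_cos_sq θ]
end

section
/- Let Ω be an alternating (m+1)-form of comass ≤ 1 on an inner product space V, with an orthonormal system ν, u_1, ..., u_m satisfying Ω(ν, u_1, ..., u_m) = 1. Then ν is the unique unit vector in the orthogonal complement of span{u_1,...,u_m} with this property: if ν' is another unit vector orthogonal to all u_i with Ω(ν', u_1, ..., u_m) = 1, then ν' = ν. -/
/-!
The map `x ↦ Ω(x, u₁, …, u_m)` is linear, and by the comass bound its absolute value is at most
`‖x‖` on the orthogonal complement of the `u i`. Both `ν` and `ν'` lie there and are sent to `1`,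
so `2 = Ω(ν + ν', u₁, …, u_m) ≤ ‖ν + ν'‖ ≤ ‖ν‖ + ‖ν'‖ = 2`. Equality in the triangle inequality
forces `ν = ν'`, since inner product spaces are strictly convex.
-/

open RealInnerProductSpace

theorem orthonormal_cons_iff {𝕜 E : Type*} [RCLike 𝕜] [NormedAddCommGroup E]
    [InnerProductSpace 𝕜 E] {n : ℕ} {w : E} {u : Fin n → E} :
    Orthonormal 𝕜 (Fin.cons w u : Fin (n + 1) → E) ↔
      ‖w‖ = 1 ∧ (∀ i, inner 𝕜 w (u i) = 0) ∧ Orthonormal 𝕜 u := by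
  have hnorm : ((‖w‖ : 𝕜) ^ 2 = 1) ↔ ‖w‖ = 1 := by
    norm_cast
    exact pow_eq_one_iff_of_nonneg (norm_nonneg w) two_ne_zero
  simp only [orthonormal_iff_ite, Fin.forall_fin_succ, Fin.cons_zero, Fin.cons_succ,
    Fin.succ_ne_zero, (Fin.succ_ne_zero _).symm, Fin.succ_inj, if_true, if_false,
    inner_self_eq_norm_sq_to_K, hnorm, inner_eq_zero_symm (x := u _), forall_and]
  tauto

theorem AlternatingMap.abs_apply_cons_le_norm {V : Type*} [NormedAddCommGroup V]
    [InnerProductSpace ℝ V] {n : ℕ} (Ω : AlternatingMap ℝ V ℝ (Fin (n + 1)))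
    (hcomass : ∀ v : Fin (n + 1) → V, Orthonormal ℝ v → |Ω v| ≤ 1)
    {u : Fin n → V} (hu : Orthonormal ℝ u) {x : V} (hx : ∀ i, ⟪x, u i⟫ = 0) :
    |Ω (Fin.cons x u)| ≤ ‖x‖ := by
  rcases eq_or_ne x 0 with rfl | hx0
  · simp [Ω.map_coord_zero 0 (Fin.cons_zero 0 u)]
  have hunit : Orthonormal ℝ (Fin.cons (‖x‖⁻¹ • x) u : Fin (n + 1) → V) :=
    orthonormal_cons_iff.mpr
      ⟨norm_smul_inv_norm hx0, fun i => by simp [inner_smul_left, hx i], hu⟩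
  have h := hcomass _ hunit
  rwa [show Ω (Fin.cons (‖x‖⁻¹ • x) u) = ‖x‖⁻¹ * Ω (Fin.cons x u) from
    Ω.toMultilinearMap.cons_smul u _ x, abs_mul, abs_inv, abs_norm,
    inv_mul_le_iff₀ (norm_pos_iff.mpr hx0), mul_one] at h

/-- Let `Ω` be an alternating `(m+1)`-form of comass `≤ 1` on a real inner product space `V`,
with an orthonormal system `ν, u₁, …, u_m` satisfying `Ω(ν, u₁, …, u_m) = 1`.  Then `ν` is the
unique unit vector orthogonal to all the `u i` with this property: if `ν'` is another unit
vector orthogonal to all the `u i` with `Ω(ν', u₁, …, u_m) = 1`, then `ν' = ν`. -/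
theorem uniqueness_of_calibrating_unit_normal
    {V : Type*} [NormedAddCommGroup V] [InnerProductSpace ℝ V]
    {m : ℕ} (Ω : AlternatingMap ℝ V ℝ (Fin (m + 1)))
    (hcomass : ∀ v : Fin (m + 1) → V, Orthonormal ℝ v → |Ω v| ≤ 1)
    (u : Fin m → V) (ν ν' : V)
    (hON : Orthonormal ℝ (Fin.cons ν u : Fin (m + 1) → V))
    (hON' : Orthonormal ℝ (Fin.cons ν' u : Fin (m + 1) → V))
    (hcal : Ω (Fin.cons ν u) = 1) (hcal' : Ω (Fin.cons ν' u) = 1) :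
    ν' = ν := by
  obtain ⟨hν, hνu, hu⟩ := orthonormal_cons_iff.mp hON
  obtain ⟨hν', hν'u, -⟩ := orthonormal_cons_iff.mp hON'
  have hsum : Ω (Fin.cons (ν' + ν) u) = 2 := by
    rw [show Ω (Fin.cons (ν' + ν) u) = Ω (Fin.cons ν' u) + Ω (Fin.cons ν u) from
      Ω.toMultilinearMap.cons_add u ν' ν, hcal', hcal]
    norm_num
  have hbound := Ω.abs_apply_cons_le_norm hcomass hu (x := ν' + ν)
    fun i => by rw [inner_add_left, hνu i, hν'u i, add_zero]
  rw [hsum] at hbound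
  refine eq_of_norm_eq_of_norm_add_eq (hν'.trans hν.symm) (le_antisymm (norm_add_le ν' ν) ?_)
  linarith [le_abs_self (2 : ℝ)]
end

section
/- Let V be an inner product space, Ω an alternating (m+1)-form on V, and suppose ν, e_1, ..., e_m is an orthonormal system with Ω of comass ≤ 1 and Ω(ν, e_1, ..., e_m) = 1. If Ω arises from an orthogonal direct sum decomposition V = V₀ ⊕ V₁ with dim V₀ = m+1 as Ω(X_1,...,X_{m+1}) = Vol₀(P(X_1),...,P(X_{m+1})), where P is the orthogonal projection onto V₀ and Vol₀ the volume form of V₀, then ν and all e_i lie in V₀. -/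
/-!
By Hadamard's inequality and `Ω(ν, u₁, …, u_m) = 1`, the norms of the projections
`P ν, P u₁, …, P u_m` have product at least `1`. Each of them is at most `1`, since `P` is
norm-nonincreasing and the vectors are unit vectors, so each equals `1`; a vector whose
orthogonal projection onto `V₀` keeps its norm lies in `V₀`.
-/

theorem Finset.eq_one_of_one_le_prod_of_le_one {ι R : Type*} [CommMonoidWithZero R]
    [PartialOrder R] [ZeroLEOneClass R] [PosMulMono R] {s : Finset ι} {f : ι → R}
    (h0 : ∀ i ∈ s, 0 ≤ f i) (h1 : ∀ i ∈ s, f i ≤ 1) (hprod : 1 ≤ ∏ i ∈ s, f i)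
    {i : ι} (hi : i ∈ s) : f i = 1 := by
  classical
  refine le_antisymm (h1 i hi) ?_
  have hrest : ∏ j ∈ s.erase i, f j ≤ 1 :=
    Finset.prod_le_one (fun j hj => h0 j (mem_of_mem_erase hj))
      (fun j hj => h1 j (mem_of_mem_erase hj))
  calc 1 ≤ ∏ j ∈ s, f j := hprod
    _ = f i * ∏ j ∈ s.erase i, f j := (Finset.mul_prod_erase s f hi).symm
    _ ≤ f i := mul_le_of_le_one_right (h0 i hi) hrest

theorem product_calibration_forces_slice_general
    {V : Type*} [NormedAddCommGroup V] [InnerProductSpace ℝ V] [FiniteDimensional ℝ V]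
    {m : ℕ} (V₀ : Submodule ℝ V)
    (Vol₀ : AlternatingMap ℝ V₀ ℝ (Fin (m + 1)))
    (hHadamard : ∀ v : Fin (m + 1) → V₀, |Vol₀ v| ≤ ∏ i, ‖v i‖)
    (Ω : (Fin (m + 1) → V) → ℝ)
    (hΩ : ∀ v : Fin (m + 1) → V,
      Ω v = Vol₀ (fun i => (Submodule.orthogonalProjection V₀ (v i) : V₀)))
    (ν : V) (u : Fin m → V)
    (hON : Orthonormal ℝ (Fin.cons ν u : Fin (m + 1) → V))
    (hcal : Ω (Fin.cons ν u) = 1) :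
    ν ∈ V₀ ∧ ∀ i, u i ∈ V₀ := by
  set w : Fin (m + 1) → V := Fin.cons ν u
  have hproj_le : ∀ i, ‖V₀.orthogonalProjectionOnto (w i)‖ ≤ 1 := fun i =>
    (V₀.norm_orthogonalProjectionOnto_apply_le (w i)).trans_eq (hON.1 i)
  have hprod : 1 ≤ ∏ i, ‖V₀.orthogonalProjectionOnto (w i)‖ := by
    simpa [← hΩ, hcal] using hHadamard fun i => V₀.orthogonalProjectionOnto (w i)
  have hmem : ∀ i, w i ∈ V₀ := fun i => by
    rw [V₀.mem_iff_norm_starProjection, hON.1 i]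
    exact Finset.eq_one_of_one_le_prod_of_le_one (fun _ _ => norm_nonneg _)
      (fun j _ => hproj_le j) hprod (Finset.mem_univ i)
  exact ⟨hmem 0, fun i => hmem i.succ⟩

/-- Let `V = V₀ ⊕ V₀ᗮ` be an orthogonal decomposition of a finite-dimensional real inner
product space with `dim V₀ = m+1`, `Vol₀` the volume form of `V₀` (characterized by the
Hadamard bound `|Vol₀ v| ≤ ∏‖vᵢ‖` and `|Vol₀| = 1` on orthonormal systems), and let
`Ω(X₁,…,X_{m+1}) = Vol₀(P X₁, …, P X_{m+1})` with `P` the orthogonal projection onto `V₀`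
(so `Ω` has comass `1` with calibrated subspace `V₀`).  If `ν, u₁, …, u_m` is an
orthonormal system with `Ω(ν, u₁, …, u_m) = 1`, then `ν` and all the `uᵢ` lie in `V₀`. -/
theorem product_calibration_forces_slice
    {V : Type*} [NormedAddCommGroup V] [InnerProductSpace ℝ V] [FiniteDimensional ℝ V]
    {m : ℕ} (V₀ : Submodule ℝ V) (hdim : Module.finrank ℝ V₀ = m + 1)
    (Vol₀ : AlternatingMap ℝ V₀ ℝ (Fin (m + 1)))
    (hHadamard : ∀ v : Fin (m + 1) → V₀, |Vol₀ v| ≤ ∏ i, ‖v i‖)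
    (hVolON : ∀ v : Fin (m + 1) → V₀, Orthonormal ℝ v → |Vol₀ v| = 1)
    (Ω : (Fin (m + 1) → V) → ℝ)
    (hΩ : ∀ v : Fin (m + 1) → V,
      Ω v = Vol₀ (fun i => (Submodule.orthogonalProjection V₀ (v i) : V₀)))
    (ν : V) (u : Fin m → V)
    (hON : Orthonormal ℝ (Fin.cons ν u : Fin (m + 1) → V))
    (hcal : Ω (Fin.cons ν u) = 1) :
    ν ∈ V₀ ∧ ∀ i, u i ∈ V₀ :=
  product_calibration_forces_slice_general V₀ Vol₀ hHadamard Ω hΩ ν u hON hcal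
end
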